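/- For β > 0 define G_β(q) = q/(1−q) + log(1−q) + (β²/2)(1 − q²) on [0,1). If β > 1, then G_β attains its infimum on [0,1) at q = 1 − 1/β, and inf_{q∈[0,1)} G_β(q) = 2β − 3/2 − log β (so that P(β) = ½ inf G_β = ½(2β − 3/2 − log β)). If 0 < β ≤ 1, then G_β attains its infimum at q = 0, and the infimum equals β²/2. -/

import Mathlib

/-!
Since `G_β'(q) = q (1 - (β (1 - q))²) / (1 - q)²` on `[0, 1)`, the functional decreases while
`β (1 - q) ≥ 1` and increases once `β (1 - q) ≤ 1`. For `β > 1` the minimum is therefore at the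
critical point `q = 1 - 1/β`; for `β ≤ 1` the functional is increasing and the minimum is at `0`.
-/

/-- The replica-symmetric functional G_β(q) = q/(1−q) + log(1−q) + (β²/2)(1 − q²) for the
pure 2-spin spherical model without external field. -/
noncomputable def Gfun (β q : ℝ) : ℝ :=
  q / (1 - q) + Real.log (1 - q) + β ^ 2 / 2 * (1 - q ^ 2)

open Set

theorem hasDerivAt_Gfun (β : ℝ) {q : ℝ} (hq : q < 1) :
    HasDerivAt (Gfun β) (q * (1 - (β * (1 - q)) ^ 2) / (1 - q) ^ 2) q := by
  have hq' : 1 - q ≠ 0 := by linarith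
  have hsub : HasDerivAt (fun x : ℝ => 1 - x) (-1) q := by
    simpa using (hasDerivAt_id q).const_sub 1
  refine ((((hasDerivAt_id' q).div hsub hq').add (hsub.log hq')).add
    ((hasDerivAt_pow 2 q).const_sub 1 |>.const_mul (β ^ 2 / 2))).congr_deriv ?_
  field_simp
  ring

theorem continuousOn_Gfun (β : ℝ) : ContinuousOn (Gfun β) (Iio 1) := fun _ hq =>
  (hasDerivAt_Gfun β hq).continuousAt.continuousWithinAt

theorem monotoneOn_Gfun {β a : ℝ} (hβ : 0 ≤ β) (ha : 0 ≤ a) (hβa : β * (1 - a) ≤ 1) :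
    MonotoneOn (Gfun β) (Ico a 1) := by
  refine monotoneOn_of_hasDerivWithinAt_nonneg (convex_Ico a 1)
    ((continuousOn_Gfun β).mono fun q hq => hq.2)
    (fun q hq => (hasDerivAt_Gfun β (interior_subset hq).2).hasDerivWithinAt) fun q hq => ?_
  rw [interior_Ico] at hq
  have hq0 : 0 ≤ q := ha.trans hq.1.le
  have hβq : β * (1 - q) ≤ 1 := by nlinarith [hq.1]
  have hβq0 : 0 ≤ β * (1 - q) := mul_nonneg hβ (by linarith [hq.2])
  have : 0 ≤ 1 - (β * (1 - q)) ^ 2 := by nlinarith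
  positivity

theorem antitoneOn_Gfun {β b : ℝ} (hβ : 0 ≤ β) (hβb : 1 ≤ β * (1 - b)) :
    AntitoneOn (Gfun β) (Icc 0 b) := by
  have hb : b < 1 := by nlinarith
  refine antitoneOn_of_hasDerivWithinAt_nonpos (convex_Icc 0 b)
    ((continuousOn_Gfun β).mono fun q hq => hq.2.trans_lt hb)
    (fun q hq => (hasDerivAt_Gfun β ((interior_subset hq).2.trans_lt hb)).hasDerivWithinAt)
    fun q hq => ?_
  rw [interior_Icc] at hq
  have hβq : 1 ≤ β * (1 - q) := by nlinarith [hq.2]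
  have : 1 - (β * (1 - q)) ^ 2 ≤ 0 := by nlinarith
  exact div_nonpos_of_nonpos_of_nonneg (mul_nonpos_of_nonneg_of_nonpos hq.1.le this) (sq_nonneg _)

theorem Gfun_zero (β : ℝ) : Gfun β 0 = β ^ 2 / 2 := by
  simp [Gfun]

theorem Gfun_one_sub_one_div {β : ℝ} (hβ : 0 < β) :
    Gfun β (1 - 1 / β) = 2 * β - 3 / 2 - Real.log β := by
  rw [Gfun, sub_sub_cancel, one_div, Real.log_inv]
  field_simp
  ring

theorem stmt14 (β : ℝ) (hβ : 0 < β) :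
    (1 < β →
      (∀ q ∈ Set.Ico (0 : ℝ) 1, Gfun β (1 - 1 / β) ≤ Gfun β q) ∧
      Gfun β (1 - 1 / β) = 2 * β - 3 / 2 - Real.log β) ∧
    (β ≤ 1 →
      (∀ q ∈ Set.Ico (0 : ℝ) 1, Gfun β 0 ≤ Gfun β q) ∧
      Gfun β 0 = β ^ 2 / 2) := by
  refine ⟨fun h1β => ?_, fun hβ1 => ?_⟩
  · set q₀ := 1 - 1 / β
    have hcrit : β * (1 - q₀) = 1 := by rw [sub_sub_cancel, mul_one_div_cancel hβ.ne']
    have hq₀ : 0 ≤ q₀ := sub_nonneg.2 ((div_le_one hβ).2 h1β.le)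
    refine ⟨fun q hq => ?_, Gfun_one_sub_one_div hβ⟩
    rcases le_total q q₀ with hle | hle
    · exact antitoneOn_Gfun hβ.le hcrit.ge ⟨hq.1, hle⟩ ⟨hq₀, le_rfl⟩ hle
    · exact monotoneOn_Gfun hβ.le hq₀ hcrit.le ⟨le_rfl, hle.trans_lt hq.2⟩ ⟨hle, hq.2⟩ hle
  · refine ⟨fun q hq => ?_, Gfun_zero β⟩
    exact monotoneOn_Gfun hβ.le le_rfl (by simpa using hβ1) ⟨le_rfl, one_pos⟩ hq hq.1
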